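/- For all integers n ≥ 1, |E(n) - α^n| < 2·α^(-n/2), where α is the real root of x^3 - x - 1. -/

import Mathlib

/-!
The error `e n = perrin n - α ^ n` is the power sum `β ^ n + γ ^ n` of the roots of the cofactor
`x ^ 2 + α x + 1 / α` of `x - α` in `x ^ 3 - x - 1`, hence `α e (n + 2) + α ^ 2 e (n + 1) + e n = 0`.
The positive definite form `Q x y = α x ^ 2 + α ^ 2 x y + y ^ 2` shrinks by the factor `α` along
this recurrence, so `α ^ n Q (e (n + 1)) (e n) = 3 - α` (it is `(3 - α) |β ^ n| ^ 2`). Completing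
the square, `4 Q x y = α (2 x + α y) ^ 2 + (3 - α) y ^ 2`, which gives `α ^ n e n ^ 2 ≤ 4`, with
equality only if `3 α ^ (n + 1) = 2 perrin (n + 1) + α perrin n`. Since `1, α, α ^ 2` are linearly
independent over `ℚ` and the `α ^ 2`-coordinate of `α ^ (n + 1)` is a (shifted) Padovan number,
vanishing only for `n + 1 ∈ {1, 3}` (and `n = 2` fails on the constant coordinate), this cannot
happen for `n ≥ 1`.
-/

def perrin : ℕ → ℕ
  | 0 => 3
  | 1 => 0
  | 2 => 2
  | n + 3 => perrin (n + 1) + perrin n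

open Polynomial

theorem irreducible_X_pow_three_sub_X_sub_one : Irreducible (X ^ 3 - X - 1 : ℚ[X]) := by
  have hdeg : (X ^ 3 - X - 1 : ℚ[X]).natDegree = 3 := by compute_degree!
  refine irreducible_of_degree_le_three_of_not_isRoot (by simp [hdeg]) fun r hr => ?_
  have hrZ : aeval r (X ^ 3 - X - 1 : ℤ[X]) = 0 := by simpa using hr
  obtain ⟨k, rfl, hk⟩ := exists_integer_of_is_root_of_monic (by monicity!) hrZ
  have hk1 : k ∣ 1 := by simpa using hk
  rcases Int.isUnit_iff.mp (isUnit_of_dvd_one hk1) with rfl | rfl <;> norm_num at hr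

def plasticCoeff : ℕ → ℕ
  | 0 => 0
  | 1 => 0
  | 2 => 1
  | n + 3 => plasticCoeff (n + 1) + plasticCoeff n

theorem plasticCoeff_add_four_pos : ∀ k, 0 < plasticCoeff (k + 4)
  | 0 | 1 | 2 => by decide
  | k + 3 => by
    rw [show plasticCoeff (k + 3 + 4) = plasticCoeff (k + 5) + plasticCoeff (k + 4) from rfl]
    exact Nat.add_pos_right _ (plasticCoeff_add_four_pos k)

noncomputable def perrinError (α : ℝ) (n : ℕ) : ℝ := perrin n - α ^ n

def normForm (α x y : ℝ) : ℝ := α * x ^ 2 + α ^ 2 * x * y + y ^ 2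

theorem normForm_step {α x y z : ℝ} (hz : α * z + α ^ 2 * x + y = 0) :
    α * normForm α z x = normForm α x y := by
  unfold normForm
  linear_combination (α * z - y) * hz

section

variable {α : ℝ} (hroot : α ^ 3 = α + 1)
include hroot

theorem eq_zero_of_rat_combination_eq_zero (a b c : ℚ) (h : a + b * α + c * α ^ 2 = 0) :
    a = 0 ∧ b = 0 ∧ c = 0 := by
  have hmin : X ^ 3 - X - 1 = minpoly ℚ α :=
    minpoly.eq_of_irreducible_of_monic irreducible_X_pow_three_sub_X_sub_one
      (by simp [hroot]) (by monicity!)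
  by_contra hne
  have hq : C a + C b * X + C c * X ^ 2 ≠ 0 := fun h0 =>
    hne ⟨by simpa using congrArg (coeff · 0) h0, by simpa using congrArg (coeff · 1) h0,
      by simpa using congrArg (coeff · 2) h0⟩
  have hle := minpoly.degree_le_of_ne_zero ℚ α hq (by simpa using h)
  have h3 : (minpoly ℚ α).degree = 3 := by rw [← hmin]; compute_degree!
  have h2 : (C a + C b * X + C c * X ^ 2).degree ≤ 2 := by compute_degree
  have := (h3 ▸ hle).trans h2
  norm_num at this

theorem pow_succ_eq_plasticCoeff (n : ℕ) :
    α ^ (n + 1) = plasticCoeff n + plasticCoeff (n + 2) * α + plasticCoeff (n + 1) * α ^ 2 := by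
  induction n with
  | zero => simp [plasticCoeff]
  | succ n ih =>
    rw [pow_succ, ih,
      show plasticCoeff (n + 1 + 2) = plasticCoeff (n + 1) + plasticCoeff n from rfl]
    push_cast
    linear_combination (plasticCoeff (n + 1) : ℝ) * hroot

theorem perrinError_add_three (n : ℕ) :
    perrinError α (n + 3) = perrinError α (n + 1) + perrinError α n := by
  simp only [perrinError, perrin]
  push_cast
  linear_combination -α ^ n * hroot

theorem perrinError_recurrence (n : ℕ) :
    α * perrinError α (n + 2) + α ^ 2 * perrinError α (n + 1) + perrinError α n = 0 := by
  induction n with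
  | zero =>
    simp only [perrinError, perrin]
    linear_combination -2 * hroot
  | succ n ih =>
    rw [perrinError_add_three hroot]
    linear_combination α * ih - perrinError α (n + 1) * hroot

theorem four_mul_normForm (x y : ℝ) :
    4 * normForm α x y = α * (2 * x + α * y) ^ 2 + (3 - α) * y ^ 2 := by
  unfold normForm
  linear_combination -y ^ 2 * hroot

theorem pow_mul_normForm_perrinError (n : ℕ) :
    α ^ n * normForm α (perrinError α (n + 1)) (perrinError α n) = 3 - α := by
  induction n with
  | zero =>
    simp only [normForm, perrinError, perrin]
    linear_combination -hroot
  | succ n ih =>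
    rw [← ih, pow_succ, mul_assoc, normForm_step (perrinError_recurrence hroot n)]

theorem two_mul_perrinError_succ_add_ne_zero {n : ℕ} (hn : 1 ≤ n) :
    2 * perrinError α (n + 1) + α * perrinError α n ≠ 0 := by
  intro hs
  have hrel : ((2 * perrin (n + 1) - 3 * plasticCoeff n : ℚ) : ℝ)
      + ((perrin n - 3 * plasticCoeff (n + 2) : ℚ) : ℝ) * α
      + ((-3 * plasticCoeff (n + 1) : ℚ) : ℝ) * α ^ 2 = 0 := by
    simp only [perrinError] at hs
    push_cast
    linear_combination hs + 3 * pow_succ_eq_plasticCoeff hroot n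
  obtain ⟨ha, -, hc⟩ := eq_zero_of_rat_combination_eq_zero hroot _ _ _ hrel
  have hc : plasticCoeff (n + 1) = 0 := by
    exact_mod_cast (by linarith : (plasticCoeff (n + 1) : ℚ) = 0)
  have ha : 2 * perrin (n + 1) = 3 * plasticCoeff n := by
    exact_mod_cast (by linarith : (2 * perrin (n + 1) : ℚ) = 3 * plasticCoeff n)
  obtain _ | _ | _ | k := n
  · omega
  · simp [plasticCoeff] at hc
  · simp [perrin, plasticCoeff] at ha
  · exact (plasticCoeff_add_four_pos k).ne' hc

theorem lt_three_of_cube_eq : α < 3 := by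
  nlinarith [sq_nonneg α, sq_nonneg (α - 3)]

theorem pow_mul_perrinError_sq_lt (hα : 0 < α) {n : ℕ} (hn : 1 ≤ n) :
    α ^ n * perrinError α n ^ 2 < 4 := by
  set s := 2 * perrinError α (n + 1) + α * perrinError α n
  have hs : s ≠ 0 := two_mul_perrinError_succ_add_ne_zero hroot hn
  have key : (3 - α) * (α ^ n * perrinError α n ^ 2) = (3 - α) * 4 - α ^ n * (α * s ^ 2) := by
    linear_combination 4 * pow_mul_normForm_perrinError hroot n
      - α ^ n * four_mul_normForm hroot (perrinError α (n + 1)) (perrinError α n)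
  have hpos : 0 < α ^ n * (α * s ^ 2) := by positivity
  refine lt_of_mul_lt_mul_left ?_ (sub_pos.mpr (lt_three_of_cube_eq hroot)).le
  linarith

end

theorem perrin_binet_error (α : ℝ) (hroot : α ^ 3 = α + 1) (hα : 1 < α) :
    ∀ n : ℕ, 1 ≤ n →
      |(perrin n : ℝ) - α ^ n| < 2 * α ^ (-(n : ℝ) / 2) := by
  intro n hn
  have hα0 : 0 < α := by linarith
  have hbound : (2 * α ^ (-(n : ℝ) / 2)) ^ 2 = 4 / α ^ n := by
    rw [mul_pow, ← Real.rpow_mul_natCast hα0.le,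
      show -(n : ℝ) / 2 * (2 : ℕ) = -n by push_cast; ring, Real.rpow_neg hα0.le, Real.rpow_natCast]
    ring
  refine abs_lt_of_sq_lt_sq ?_ (by positivity)
  rw [hbound, lt_div_iff₀ (by positivity), mul_comm]
  exact pow_mul_perrinError_sq_lt hroot hα0 hn
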